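/- arXiv:0810.3275 — 2 statements merged into one kernel-verified Lean document; each statement's English description precedes it below -/
import Mathlib

section
/- Let C and D be bounded operators on a Hilbert space such that the product C·D is selfadjoint. Then ‖C·D‖ ≤ ‖D·C‖. -/
open scoped NNReal ENNReal

theorem spectralRadius_mul_comm {𝕜 A : Type*} [NormedField 𝕜] [Ring A] [Algebra 𝕜 A]
    (a b : A) : spectralRadius 𝕜 (a * b) = spectralRadius 𝕜 (b * a) := by
  suffices h : ∀ x y : A, spectralRadius 𝕜 (x * y) ≤ spectralRadius 𝕜 (y * x) from
    le_antisymm (h a b) (h b a)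
  intro x y
  refine iSup₂_le fun k hk => ?_
  obtain rfl | hk0 := eq_or_ne k 0
  · simp
  · have hk' : k ∈ spectrum 𝕜 (y * x) \ {0} :=
      spectrum.nonzero_mul_comm (𝕜 := 𝕜) x y ▸ ⟨hk, hk0⟩
    exact le_iSup₂ (α := ℝ≥0∞) k hk'.1

/-- If the product `C·D` of bounded operators is selfadjoint, then `‖C·D‖ ≤ ‖D·C‖`. -/
theorem statement5 {H : Type*} [NormedAddCommGroup H] [InnerProductSpace ℂ H]
    [CompleteSpace H] (C D : H →L[ℂ] H) (h : IsSelfAdjoint (C.comp D)) :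
    ‖C.comp D‖ ≤ ‖D.comp C‖ := by
  nontriviality H
  suffices (‖C * D‖₊ : ℝ≥0∞) ≤ ‖D * C‖₊ from mod_cast this
  calc (‖C * D‖₊ : ℝ≥0∞) = spectralRadius ℂ (C * D) := h.spectralRadius_eq_nnnorm.symm
    _ = spectralRadius ℂ (D * C) := spectralRadius_mul_comm C D
    _ ≤ ‖D * C‖₊ := spectrum.spectralRadius_le_nnnorm (D * C)
end

section
/- Let V(x₁, x₂) = x₁² x₂² on ℝ². For every M > 0 and ℓ > 0 there is a constant C_ℓ (depending on M) such that for all x in Ω_M = {x ∈ ℝ² : V(x) < M}, ω_x^ℓ(Ω_M) ≤ C_ℓ / (|x| + 1). Consequently, for every M > 0 and every r > 0, Ω_M is r-polynomially thin: ∫_{x ∈ Ω_M} (ω_x^ℓ(Ω_M))^r d²x < ∞ for all ℓ > 0. -/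
/-!
Write `H = {(a, b) : a²b² < M} ⊆ ℝ × ℝ`. A Euclidean ball of radius `ℓ` lies in the sup-norm ball
of the same radius, so everything can be done in `ℝ × ℝ` with the sup norm. If `|a| > ℓ`, every
point of `H` within sup-distance `ℓ` of `(a, b)` has second coordinate of size at most
`√M / (|a| - ℓ)`, so the set lies in a `2ℓ × 2√M / (|a| - ℓ)` rectangle; this gives
`ω ≤ C / (1 + ‖x‖)`. Thinness then reduces to `∫_H (1 + ‖p‖)^(-r) < ∞`: on the part of `H` where
`|b| ≤ |a|` one has `|b| ≤ (1 + 2√M) / (1 + |a|)`, so by Tonelli the integral is bounded by a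
multiple of `∫_ℝ (1 + |a|)^(-1-r) da`, which is finite for `r > 0`.
-/

open MeasureTheory Metric Set
open scoped NNReal ENNReal
noncomputable section

/-- `Ω` is `r`-polynomially thin: `∫_{x ∈ Ω} (ω_x^ℓ(Ω))^r dx < ∞` for all `ℓ > 0`, where
`ω_x^ℓ(Ω) = |Ω ∩ {y : |y - x| ≤ ℓ}|`. -/
def PolynomiallyThin {ν : ℕ} (r : ℝ) (Ω : Set (EuclideanSpace ℝ (Fin ν))) : Prop :=
  ∀ ℓ : ℝ, 0 < ℓ →
    ∫⁻ x in Ω, (volume (Ω ∩ Metric.closedBall x ℓ)) ^ r ∂volume < ⊤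

def hyperbolicCross (M : ℝ) : Set (ℝ × ℝ) := {p | p.1 ^ 2 * p.2 ^ 2 < M}

variable {M : ℝ}

lemma swap_mem_hyperbolicCross {p : ℝ × ℝ} :
    p.swap ∈ hyperbolicCross M ↔ p ∈ hyperbolicCross M := by
  simp only [hyperbolicCross, mem_ofPred_eq, Prod.fst_swap, Prod.snd_swap, mul_comm]

lemma abs_mul_lt_sqrt_of_mem_hyperbolicCross {p : ℝ × ℝ} (hp : p ∈ hyperbolicCross M) :
    |p.1| * |p.2| < √M :=
  (Real.lt_sqrt (by positivity)).2 (by rwa [mul_pow, sq_abs, sq_abs])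

lemma abs_snd_le_of_mem_hyperbolicCross {p : ℝ × ℝ} (hp : p ∈ hyperbolicCross M) {d : ℝ}
    (hd : 0 < d) (hd₁ : d ≤ |p.1|) : |p.2| ≤ √M / d := by
  rw [le_div_iff₀ hd]
  nlinarith [abs_mul_lt_sqrt_of_mem_hyperbolicCross hp, abs_nonneg p.2]

lemma volume_hyperbolicCross_inter_closedBall_le {p : ℝ × ℝ} {ℓ : ℝ} (hℓ : ℓ < |p.1|) :
    volume (hyperbolicCross M ∩ closedBall p ℓ)
      ≤ ENNReal.ofReal (2 * ℓ) * ENNReal.ofReal (2 * (√M / (|p.1| - ℓ))) := by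
  have hsub : hyperbolicCross M ∩ closedBall p ℓ
      ⊆ closedBall p.1 ℓ ×ˢ closedBall 0 (√M / (|p.1| - ℓ)) := by
    rintro q ⟨hq, hqp⟩
    rw [← closedBall_prod_same] at hqp
    refine ⟨hqp.1, ?_⟩
    have hq₁ : |q.1 - p.1| ≤ ℓ := hqp.1
    rw [mem_closedBall_zero_iff, Real.norm_eq_abs]
    exact abs_snd_le_of_mem_hyperbolicCross hq (by linarith)
      (by linarith [abs_sub_abs_le_abs_sub p.1 q.1, abs_sub_comm p.1 q.1])
  calc volume (hyperbolicCross M ∩ closedBall p ℓ)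
      ≤ volume (closedBall p.1 ℓ ×ˢ closedBall 0 (√M / (|p.1| - ℓ))) := measure_mono hsub
    _ = _ := by rw [Measure.volume_eq_prod, Measure.prod_prod, Real.volume_closedBall,
        Real.volume_closedBall]

lemma volume_hyperbolicCross_inter_closedBall_swap (p : ℝ × ℝ) (ℓ : ℝ) :
    volume (hyperbolicCross M ∩ closedBall p.swap ℓ) =
      volume (hyperbolicCross M ∩ closedBall p ℓ) := by
  have hswap : MeasurePreserving (MeasurableEquiv.prodComm : ℝ × ℝ ≃ᵐ ℝ × ℝ) := by
    rw [Measure.volume_eq_prod]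
    exact Measure.measurePreserving_swap
  rw [← hswap.measure_preimage_equiv]
  congr 1
  ext q
  change q.swap ∈ hyperbolicCross M ∧ q.swap ∈ closedBall p.swap ℓ ↔ _
  simp only [hyperbolicCross, mem_ofPred_eq, mem_inter_iff, mem_closedBall, Prod.dist_eq,
    Prod.fst_swap, Prod.snd_swap, mul_comm, max_comm]

lemma volume_closedBall_prod (p : ℝ × ℝ) (ℓ : ℝ) :
    volume (closedBall p ℓ) = ENNReal.ofReal (2 * ℓ) * ENNReal.ofReal (2 * ℓ) := by
  rw [← closedBall_prod_same, Measure.volume_eq_prod, Measure.prod_prod, Real.volume_closedBall,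
    Real.volume_closedBall]

lemma volume_hyperbolicCross_inter_closedBall_le_div {p : ℝ × ℝ} {ℓ : ℝ} (hℓ : 0 ≤ ℓ)
    (hp : 2 * ℓ + 1 ≤ |p.1|) :
    volume (hyperbolicCross M ∩ closedBall p ℓ) ≤ ENNReal.ofReal (8 * ℓ * √M / (1 + |p.1|)) := by
  have hd : 0 < |p.1| - ℓ := by linarith
  refine (volume_hyperbolicCross_inter_closedBall_le (by linarith)).trans ?_
  rw [← ENNReal.ofReal_mul (by linarith)]
  refine ENNReal.ofReal_le_ofReal ?_
  rw [mul_div_assoc', mul_div_assoc', div_le_div_iff₀ hd (by positivity)]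
  nlinarith [mul_nonneg hℓ (Real.sqrt_nonneg M)]

lemma exists_volume_hyperbolicCross_inter_closedBall_le (M : ℝ) {ℓ : ℝ} (hℓ : 0 ≤ ℓ) :
    ∃ C, 0 ≤ C ∧ ∀ p : ℝ × ℝ,
      volume (hyperbolicCross M ∩ closedBall p ℓ) ≤ ENNReal.ofReal (C / (1 + ‖p‖)) := by
  set C := max ((2 * ℓ) * (2 * ℓ) * (2 * ℓ + 2)) (8 * ℓ * √M)
  refine ⟨C, by positivity, fun p => ?_⟩
  by_cases hp : ‖p‖ ≤ 2 * ℓ + 1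
  · calc volume (hyperbolicCross M ∩ closedBall p ℓ) ≤ volume (closedBall p ℓ) :=
          measure_mono inter_subset_right
      _ = ENNReal.ofReal ((2 * ℓ) * (2 * ℓ)) := by
          rw [volume_closedBall_prod, ← ENNReal.ofReal_mul (by linarith)]
      _ ≤ ENNReal.ofReal (C / (1 + ‖p‖)) := by
          refine ENNReal.ofReal_le_ofReal ?_
          rw [le_div_iff₀ (by positivity)]
          calc 2 * ℓ * (2 * ℓ) * (1 + ‖p‖) ≤ (2 * ℓ) * (2 * ℓ) * (2 * ℓ + 2) :=
                mul_le_mul_of_nonneg_left (by linarith) (by positivity)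
            _ ≤ C := le_max_left _ _
  have hC : 8 * ℓ * √M ≤ C := le_max_right _ _
  rw [not_le] at hp
  rw [Prod.norm_def, Real.norm_eq_abs, Real.norm_eq_abs] at hp ⊢
  rcases le_total |p.2| |p.1| with h | h
  · rw [max_eq_left h] at hp ⊢
    refine (volume_hyperbolicCross_inter_closedBall_le_div hℓ (by linarith)).trans ?_
    gcongr
  · rw [max_eq_right h] at hp ⊢
    rw [← volume_hyperbolicCross_inter_closedBall_swap]
    refine (volume_hyperbolicCross_inter_closedBall_le_div (p := p.swap) hℓ hp.le).trans ?_
    simp only [Prod.fst_swap]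
    gcongr

lemma abs_snd_mul_one_add_abs_fst_le {p : ℝ × ℝ} (hp : p ∈ hyperbolicCross M)
    (h : |p.2| ≤ |p.1|) : |p.2| * (1 + |p.1|) ≤ 1 + 2 * √M := by
  have hmul := abs_mul_lt_sqrt_of_mem_hyperbolicCross hp
  have hsnd : |p.2| ≤ 1 + √M := by
    rcases le_or_gt |p.1| 1 with h₁ | h₁
    · linarith [Real.sqrt_nonneg M]
    · linarith [abs_snd_le_of_mem_hyperbolicCross hp one_pos h₁.le, div_one √M]
  nlinarith

lemma lintegral_indicator_abs_snd_le_lt_top (c : ℝ) {r : ℝ} (hr : 0 < r) :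
    ∫⁻ q : ℝ × ℝ, {q : ℝ × ℝ | |q.2| ≤ c / (1 + |q.1|)}.indicator
      (fun q => ENNReal.ofReal ((1 + |q.1|) ^ (-r))) q < ⊤ := by
  have hslice (a : ℝ) : ∫⁻ b : ℝ, {q : ℝ × ℝ | |q.2| ≤ c / (1 + |q.1|)}.indicator
      (fun q => ENNReal.ofReal ((1 + |q.1|) ^ (-r))) (a, b)
      = ENNReal.ofReal (2 * c) * ENNReal.ofReal ((1 + ‖a‖) ^ (-(1 + r))) := by
    have ha : 0 < 1 + |a| := by positivity
    calc _ = ∫⁻ b : ℝ, (closedBall (0 : ℝ) (c / (1 + |a|))).indicator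
          (fun _ => ENNReal.ofReal ((1 + |a|) ^ (-r))) b := by
          congr 1 with b
          simp only [indicator, mem_ofPred_eq, mem_closedBall_zero_iff, Real.norm_eq_abs]
      _ = ENNReal.ofReal ((1 + |a|) ^ (-r) * (2 * (c / (1 + |a|)))) := by
          rw [lintegral_indicator_const measurableSet_closedBall, Real.volume_closedBall,
            ← ENNReal.ofReal_mul (by positivity)]
      _ = _ := by
          rw [← ENNReal.ofReal_mul' (by positivity), Real.norm_eq_abs, neg_add, Real.rpow_add ha,
            Real.rpow_neg_one]
          ring_nf
  rw [Measure.volume_eq_prod]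
  calc _ ≤ ∫⁻ a : ℝ, ∫⁻ b : ℝ, {q : ℝ × ℝ | |q.2| ≤ c / (1 + |q.1|)}.indicator
        (fun q => ENNReal.ofReal ((1 + |q.1|) ^ (-r))) (a, b) := lintegral_prod_le _
    _ = ENNReal.ofReal (2 * c) * ∫⁻ a : ℝ, ENNReal.ofReal ((1 + ‖a‖) ^ (-(1 + r))) := by
        simp only [hslice]
        exact lintegral_const_mul' _ _ ENNReal.ofReal_ne_top
    _ < ⊤ := ENNReal.mul_lt_top ENNReal.ofReal_lt_top
        (finite_integral_one_add_norm (by rw [Module.finrank_self, Nat.cast_one]; linarith))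

lemma setLIntegral_hyperbolicCross_one_add_norm_rpow_lt_top (M : ℝ) {r : ℝ} (hr : 0 < r) :
    ∫⁻ p in hyperbolicCross M, ENNReal.ofReal ((1 + ‖p‖) ^ (-r)) < ⊤ := by
  set S := {q : ℝ × ℝ | |q.2| ≤ (1 + 2 * √M) / (1 + |q.1|)}
  set f : ℝ × ℝ → ℝ≥0∞ := fun q => ENNReal.ofReal ((1 + |q.1|) ^ (-r))
  have hmem (q : ℝ × ℝ) (hq : q ∈ hyperbolicCross M) (h : |q.2| ≤ |q.1|) : q ∈ S := by
    rw [mem_ofPred_eq, le_div_iff₀ (by positivity)]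
    exact abs_snd_mul_one_add_abs_fst_le hq h
  have hle : ∀ p ∈ hyperbolicCross M,
      ENNReal.ofReal ((1 + ‖p‖) ^ (-r)) ≤ S.indicator f p + S.indicator f p.swap := by
    intro p hp
    rw [Prod.norm_def, Real.norm_eq_abs, Real.norm_eq_abs]
    rcases le_total |p.2| |p.1| with h | h
    · rw [max_eq_left h]
      exact (indicator_of_mem (hmem p hp h) f).symm.trans_le le_self_add
    · rw [max_eq_right h]
      exact (indicator_of_mem (hmem p.swap (swap_mem_hyperbolicCross.2 hp) h) f).symm.trans_le
        le_add_self
  have hmeas : Measurable (S.indicator f) :=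
    (Measurable.ennreal_ofReal (by fun_prop)).indicator
      (measurableSet_le (by fun_prop) (by fun_prop))
  have hfin := lintegral_indicator_abs_snd_le_lt_top (1 + 2 * √M) hr
  calc ∫⁻ p in hyperbolicCross M, ENNReal.ofReal ((1 + ‖p‖) ^ (-r))
      ≤ ∫⁻ p in hyperbolicCross M, S.indicator f p + S.indicator f p.swap :=
        setLIntegral_mono' (measurableSet_lt (by fun_prop) (by fun_prop)) hle
    _ ≤ ∫⁻ p, S.indicator f p + S.indicator f p.swap := setLIntegral_le_lintegral _ _
    _ = (∫⁻ p, S.indicator f p) + ∫⁻ p, S.indicator f p := by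
        rw [lintegral_add_left hmeas]
        congr 1
        rw [Measure.volume_eq_prod]
        exact lintegral_prod_swap _
    _ < ⊤ := ENNReal.add_lt_top.2 ⟨hfin, hfin⟩

lemma setLIntegral_volume_hyperbolicCross_inter_closedBall_rpow_lt_top (M : ℝ) {ℓ r : ℝ}
    (hℓ : 0 ≤ ℓ) (hr : 0 < r) :
    ∫⁻ p in hyperbolicCross M, volume (hyperbolicCross M ∩ closedBall p ℓ) ^ r < ⊤ := by
  obtain ⟨C, hC, hbound⟩ := exists_volume_hyperbolicCross_inter_closedBall_le M hℓ
  have hle (p : ℝ × ℝ) : volume (hyperbolicCross M ∩ closedBall p ℓ) ^ r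
      ≤ ENNReal.ofReal (C ^ r) * ENNReal.ofReal ((1 + ‖p‖) ^ (-r)) := by
    have hp : 0 < 1 + ‖p‖ := by positivity
    calc volume (hyperbolicCross M ∩ closedBall p ℓ) ^ r ≤ ENNReal.ofReal (C / (1 + ‖p‖)) ^ r :=
          ENNReal.rpow_le_rpow (hbound p) hr.le
      _ = _ := by
          rw [ENNReal.ofReal_rpow_of_nonneg (by positivity) hr.le,
            ← ENNReal.ofReal_mul (by positivity), Real.div_rpow hC hp.le, Real.rpow_neg hp.le,
            div_eq_mul_inv]
  calc _ ≤ ∫⁻ p in hyperbolicCross M,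
          ENNReal.ofReal (C ^ r) * ENNReal.ofReal ((1 + ‖p‖) ^ (-r)) := lintegral_mono hle
    _ = ENNReal.ofReal (C ^ r) * ∫⁻ p in hyperbolicCross M, ENNReal.ofReal ((1 + ‖p‖) ^ (-r)) :=
        lintegral_const_mul' _ _ ENNReal.ofReal_ne_top
    _ < ⊤ := ENNReal.mul_lt_top ENNReal.ofReal_lt_top
        (setLIntegral_hyperbolicCross_one_add_norm_rpow_lt_top M hr)

local notation "ℝ²" => EuclideanSpace ℝ (Fin 2)

def measurableEquivProd : ℝ² ≃ᵐ ℝ × ℝ :=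
  (MeasurableEquiv.toLp 2 (Fin 2 → ℝ)).symm.trans MeasurableEquiv.finTwoArrow

@[simp]
lemma measurableEquivProd_apply (x : ℝ²) : measurableEquivProd x = (x 0, x 1) := rfl

lemma measurePreserving_measurableEquivProd : MeasurePreserving measurableEquivProd :=
  (EuclideanSpace.volume_preserving_symm_measurableEquiv_toLp _).trans
    (volume_preserving_finTwoArrow ℝ)

lemma dist_measurableEquivProd_le (x y : ℝ²) :
    dist (measurableEquivProd x) (measurableEquivProd y) ≤ dist x y := by
  rw [measurableEquivProd_apply, measurableEquivProd_apply, Prod.dist_eq]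
  exact max_le (PiLp.dist_apply_le x y 0) (PiLp.dist_apply_le x y 1)

lemma norm_le_two_mul_norm_measurableEquivProd (x : ℝ²) :
    ‖x‖ ≤ 2 * ‖measurableEquivProd x‖ := by
  rw [measurableEquivProd_apply, Prod.norm_def, EuclideanSpace.norm_eq, Fin.sum_univ_two]
  set m := max ‖x 0‖ ‖x 1‖
  have h₀ : ‖x 0‖ ≤ m := le_max_left _ _
  have h₁ : ‖x 1‖ ≤ m := le_max_right _ _
  refine Real.sqrt_le_iff.2 ⟨by positivity, ?_⟩
  nlinarith [norm_nonneg (x 0), norm_nonneg (x 1)]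

lemma volume_preimage_hyperbolicCross_inter_closedBall_le (M ℓ : ℝ) (x : ℝ²) :
    volume (measurableEquivProd ⁻¹' hyperbolicCross M ∩ closedBall x ℓ)
      ≤ volume (hyperbolicCross M ∩ closedBall (measurableEquivProd x) ℓ) := by
  rw [← measurePreserving_measurableEquivProd.measure_preimage_equiv]
  exact measure_mono (inter_subset_inter_right _ fun y hy =>
    (dist_measurableEquivProd_le y x).trans hy)

lemma exists_toReal_volume_preimage_hyperbolicCross_inter_closedBall_le (M : ℝ) {ℓ : ℝ}
    (hℓ : 0 ≤ ℓ) : ∃ C, ∀ x : ℝ²,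
      (volume (measurableEquivProd ⁻¹' hyperbolicCross M ∩ closedBall x ℓ)).toReal
        ≤ C / (‖x‖ + 1) := by
  obtain ⟨C, hC, hbound⟩ := exists_volume_hyperbolicCross_inter_closedBall_le M hℓ
  refine ⟨2 * C, fun x => ENNReal.toReal_le_of_le_ofReal (by positivity) ?_⟩
  refine (volume_preimage_hyperbolicCross_inter_closedBall_le M ℓ x).trans
    ((hbound _).trans (ENNReal.ofReal_le_ofReal ?_))
  rw [div_le_div_iff₀ (by positivity) (by positivity)]
  nlinarith [norm_le_two_mul_norm_measurableEquivProd x]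

lemma polynomiallyThin_preimage_hyperbolicCross (M : ℝ) {r : ℝ} (hr : 0 < r) :
    PolynomiallyThin r (measurableEquivProd ⁻¹' hyperbolicCross M) := fun ℓ hℓ =>
  calc _ ≤ ∫⁻ x in measurableEquivProd ⁻¹' hyperbolicCross M,
        volume (hyperbolicCross M ∩ closedBall (measurableEquivProd x) ℓ) ^ r :=
        lintegral_mono fun x =>
          ENNReal.rpow_le_rpow (volume_preimage_hyperbolicCross_inter_closedBall_le M ℓ x) hr.le
    _ = ∫⁻ p in hyperbolicCross M, volume (hyperbolicCross M ∩ closedBall p ℓ) ^ r :=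
        measurePreserving_measurableEquivProd.setLIntegral_comp_preimage_emb
          measurableEquivProd.measurableEmbedding
          (fun p => volume (hyperbolicCross M ∩ closedBall p ℓ) ^ r) _
    _ < ⊤ := setLIntegral_volume_hyperbolicCross_inter_closedBall_rpow_lt_top M hℓ.le hr

theorem statement15 (V : EuclideanSpace ℝ (Fin 2) → ℝ)
    (hV : ∀ x, V x = (x 0) ^ 2 * (x 1) ^ 2) :
    (∀ M : ℝ, 0 < M → ∀ ℓ : ℝ, 0 < ℓ → ∃ Cℓ : ℝ,
      ∀ x ∈ {x : EuclideanSpace ℝ (Fin 2) | V x < M},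
        (volume ({y | V y < M} ∩ Metric.closedBall x ℓ)).toReal ≤ Cℓ / (‖x‖ + 1)) ∧
    (∀ M : ℝ, 0 < M → ∀ r : ℝ, 0 < r →
      PolynomiallyThin r {x : EuclideanSpace ℝ (Fin 2) | V x < M}) := by
  have hΩ (M : ℝ) : {x | V x < M} = measurableEquivProd ⁻¹' hyperbolicCross M := by
    ext x
    simp [hV, hyperbolicCross]
  refine ⟨fun M _ ℓ hℓ => ?_,
    fun M _ r hr => hΩ M ▸ polynomiallyThin_preimage_hyperbolicCross M hr⟩
  obtain ⟨C, hC⟩ := exists_toReal_volume_preimage_hyperbolicCross_inter_closedBall_le M hℓ.le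
  exact ⟨C, fun x _ => hΩ M ▸ hC x⟩
end
end
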